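/- Let kᵢ, ℓᵢ (1 ≤ i ≤ m), b, n₁, n₂ be positive integers with kᵢ, ℓᵢ ≤ b for all i and 9b² < n₁, 9b² < n₂. For each i let Rᵢ be a family of kᵢ×ℓᵢ rectangles in Z_{n₁} × Z_{n₂}, and suppose R = R₁ ∪ ... ∪ R_m is proj-intersecting. Then either |Rᵢ| ≤ ℓᵢ·n₁ for all i, or |Rᵢ| ≤ kᵢ·n₂ for all i. -/

import Mathlib

/-!
Record each rectangle by its lower-left corner. If the second projections of any two rectangles
come within distance `b` of each other, all second corners lie in one window of `4b - 3`
consecutive values. Otherwise two rectangles have second projections farther apart; they meet in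
the first coordinate, and every rectangle, whose second projection is too short to meet both of
theirs, meets one of them there, so all first corners lie in such a window.

For `k × l` rectangles whose second corners lie in a window, let `U` and `V` have the lowest and
the highest second corner. A rectangle whose second corner is at least `l` above `U`'s (or below
`V`'s) misses it in the second coordinate, hence meets it in the first, and its first corner takes
one of only `2k - 1` values. Counting by slices of second corners gives at most `l · N`
rectangles, because `(2k - 1)(4b - 3) < 9b² < N`.
-/

/-- Cyclic distance in `ZMod n`: the smaller of the two distances along the cycle. -/
def cdist {n : ℕ} (u v : ZMod n) : ℕ := min (u - v).val (v - u).val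

/-- The cyclic interval of length `k` with left end `i` in `ZMod n`. -/
def cInt {n : ℕ} (i : ZMod n) (k : ℕ) : Finset (ZMod n) :=
  (Finset.range k).image (fun j : ℕ => (i + (j : ZMod n) : ZMod n))

/-- Distance between two cyclic intervals: minimum cyclic distance between elements. -/
noncomputable def iDist {n : ℕ} (I J : Finset (ZMod n)) : ℕ :=
  sInf {d | ∃ u ∈ I, ∃ v ∈ J, d = cdist u v}

/-- `P` is a `k × ℓ` rectangle in `ZMod n₁ × ZMod n₂`. -/
def IsRect {n₁ n₂ : ℕ} (k ℓ : ℕ) (P : Finset (ZMod n₁) × Finset (ZMod n₂)) : Prop :=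
  (∃ i, P.1 = cInt i k) ∧ (∃ j, P.2 = cInt j ℓ)

/-- A family of rectangles is proj-intersecting if any two members have intersecting
projections in at least one coordinate. -/
def ProjIntersecting {n₁ n₂ : ℕ} (R : Finset (Finset (ZMod n₁) × Finset (ZMod n₂))) : Prop :=
  ∀ P ∈ R, ∀ Q ∈ R, (P.1 ∩ Q.1).Nonempty ∨ (P.2 ∩ Q.2).Nonempty

theorem card_le_of_mapsTo_prod_Ico {α β : Type*} {S : Finset α} {f : α → β} {t : α → ℕ}
    (hinj : Set.InjOn (fun a => (f a, t a)) S) {B : Finset β} {lo hi : ℕ}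
    (hmaps : ∀ a ∈ S, f a ∈ B ∧ t a ∈ Finset.Ico lo hi) :
    S.card ≤ B.card * (hi - lo) := by
  rw [← Nat.card_Ico lo hi, ← Finset.card_product]
  exact Finset.card_le_card_of_injOn _ (fun a ha => Finset.mem_product.2 (hmaps a ha)) hinj

theorem mul_add_mul_min_add_mul_tsub_le {N c l g : ℕ} (hc : 2 * c ≤ N) (hcg : c * (l + g) ≤ l * N) :
    c * g + c * min l g + N * (l - g) ≤ l * N := by
  rcases le_total g l with hgl | hlg
  · rw [min_eq_right hgl]
    have : N * g + N * (l - g) = l * N := by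
      rw [← Nat.mul_add, Nat.add_sub_cancel' hgl, Nat.mul_comm]
    nlinarith
  · rw [min_eq_left hlg, Nat.sub_eq_zero_of_le hlg, Nat.mul_zero, Nat.add_zero, ← Nat.mul_add,
      Nat.add_comm]
    exact hcg

theorem card_le_of_far_mem_near {α β : Type*} [Fintype β] {S : Finset α} {f : α → β}
    {t : α → ℕ} {near : β → Finset β} {c l T : ℕ}
    (hinj : Set.InjOn (fun a => (f a, t a)) S) (hnear : ∀ x, (near x).card ≤ c)
    (ht : ∀ a ∈ S, t a ≤ T)
    (hfar : ∀ a ∈ S, ∀ a' ∈ S, t a + l ≤ t a' ∨ t a' + l ≤ t a → f a ∈ near (f a'))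
    (hc : 2 * c ≤ Fintype.card β) (hcT : c * (T + 1) ≤ l * Fintype.card β) :
    S.card ≤ l * Fintype.card β := by
  rcases S.eq_empty_or_nonempty with rfl | hS
  · simp
  obtain ⟨U, hU, hUmin⟩ := S.exists_min_image t hS
  obtain ⟨V, hV, hVmax⟩ := S.exists_max_image t hS
  by_cases hshort : t V < t U + l
  · calc S.card ≤ (Finset.univ : Finset β).card * (t U + l - t U) :=
          card_le_of_mapsTo_prod_Ico hinj fun a ha =>
            ⟨Finset.mem_univ _, Finset.mem_Ico.2 ⟨hUmin a ha, (hVmax a ha).trans_lt hshort⟩⟩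
      _ = l * Fintype.card β := by rw [Finset.card_univ, Nat.add_sub_cancel_left, Nat.mul_comm]
  obtain ⟨g, hg⟩ : ∃ g, t V + 1 = t U + l + g := ⟨t V + 1 - (t U + l), by omega⟩
  have hinj' : ∀ (p : α → Prop) [DecidablePred p], Set.InjOn (fun a => (f a, t a)) (S.filter p) :=
    fun p _ => hinj.mono (Finset.coe_subset.2 (Finset.filter_subset p S))
  have hhigh : (S.filter fun a => t U + l ≤ t a).card ≤ c * g := by
    refine (card_le_of_mapsTo_prod_Ico (hinj' _) (B := near (f U)) (lo := t U + l)
      (hi := t U + l + g) fun a ha => ?_).trans ?_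
    · rw [Finset.mem_filter] at ha
      exact ⟨hfar a ha.1 U hU (Or.inr ha.2),
        Finset.mem_Ico.2 ⟨ha.2, by have := hVmax a ha.1; omega⟩⟩
    · rw [Nat.add_sub_cancel_left]; exact Nat.mul_le_mul_right _ (hnear _)
  have hlow : (S.filter fun a => ¬ t U + l ≤ t a ∧ t a + l ≤ t V).card ≤ c * min l g := by
    refine (card_le_of_mapsTo_prod_Ico (hinj' _) (B := near (f V)) (lo := t U) (hi := t U + min l g)
      fun a ha => ?_).trans ?_
    · rw [Finset.mem_filter] at ha
      exact ⟨hfar a ha.1 V hV (Or.inl ha.2.2),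
        Finset.mem_Ico.2 ⟨hUmin a ha.1, by omega⟩⟩
    · rw [Nat.add_sub_cancel_left]; exact Nat.mul_le_mul_right _ (hnear _)
  have hmid : (S.filter fun a => ¬ t U + l ≤ t a ∧ ¬ t a + l ≤ t V).card
      ≤ Fintype.card β * (l - g) := by
    refine (card_le_of_mapsTo_prod_Ico (hinj' _) (B := Finset.univ) (lo := t U + g) (hi := t U + l)
      fun a ha => ?_).trans ?_
    · rw [Finset.mem_filter] at ha
      exact ⟨Finset.mem_univ _, Finset.mem_Ico.2 ⟨by omega, by omega⟩⟩
    · rw [Finset.card_univ, Nat.add_sub_add_left]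
  have hsplit := Finset.card_filter_add_card_filter_not (s := S) (fun a => t U + l ≤ t a)
  have hsplit' := Finset.card_filter_add_card_filter_not
    (s := S.filter fun a => ¬ t U + l ≤ t a) (fun a => t a + l ≤ t V)
  rw [Finset.filter_filter, Finset.filter_filter] at hsplit'
  have hspan : l + g ≤ T + 1 := by have := ht V hV; omega
  calc S.card ≤ c * g + c * min l g + Fintype.card β * (l - g) := by omega
    _ ≤ l * Fintype.card β :=
      mul_add_mul_min_add_mul_tsub_le hc ((Nat.mul_le_mul_left c hspan).trans hcT)

section
variable {n : ℕ}

theorem mem_cInt {i x : ZMod n} {k : ℕ} : x ∈ cInt i k ↔ ∃ s < k, i + s = x := by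
  simp [cInt]

theorem exists_eq_add_of_mem_cInt {q u v : ZMod n} {m : ℕ} (hu : u ∈ cInt q m)
    (hv : v ∈ cInt q m) : ∃ d : ℤ, |d| < m ∧ u = v + d := by
  obtain ⟨s, hs, rfl⟩ := mem_cInt.1 hu
  obtain ⟨s', hs', rfl⟩ := mem_cInt.1 hv
  exact ⟨s - s', by rw [abs_lt]; omega, by push_cast; ring⟩

theorem exists_eq_add_of_cInt_inter_nonempty {i j : ZMod n} {k : ℕ}
    (h : (cInt i k ∩ cInt j k).Nonempty) : ∃ d : ℤ, |d| < k ∧ i = j + d := by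
  obtain ⟨x, hx⟩ := h
  obtain ⟨s, hs, hi⟩ := mem_cInt.1 (Finset.mem_inter.1 hx).1
  obtain ⟨s', hs', hj⟩ := mem_cInt.1 (Finset.mem_inter.1 hx).2
  exact ⟨s' - s, by rw [abs_lt]; omega, by push_cast; linear_combination hi - hj⟩

theorem eq_of_intCast_zmod_eq_of_abs_sub_lt {x y : ℤ} (h : (x : ZMod n) = y) (hxy : |x - y| < n) :
    x = y := by
  rw [ZMod.intCast_eq_intCast_iff_dvd_sub] at h
  have := Int.eq_zero_of_abs_lt_dvd h (by rwa [abs_sub_comm])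
  omega

theorem exists_window_of_mem_cInt {q q₀ u v : ZMod n} {m m₀ b : ℕ} {d : ℤ} (hm : m ≤ b)
    (hm₀ : m₀ ≤ b) (hu : u ∈ cInt q m) (hv : v ∈ cInt q₀ m₀) (hd : |d| < b) (huv : u = v + d) :
    ∃ t ≤ 4 * b - 4, q = q₀ - (2 * b - 2 : ℕ) + t := by
  obtain ⟨s, hs, rfl⟩ := mem_cInt.1 hu
  obtain ⟨s₀, hs₀, rfl⟩ := mem_cInt.1 hv
  rw [abs_lt] at hd
  obtain ⟨t, ht⟩ : ∃ t : ℕ, (t : ℤ) = 2 * b - 2 + s₀ + d - s :=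
    ⟨(2 * b - 2 + s₀ + d - s).toNat, by omega⟩
  refine ⟨t, by omega, ?_⟩
  have ht' : ((t : ℤ) : ZMod n) = ((2 * b - 2 : ℕ) : ℤ) + s₀ + d - s := by
    rw [ht]; push_cast [show 2 ≤ 2 * b by omega]; ring
  push_cast at ht' ⊢
  linear_combination huv - ht'

end

theorem card_le_of_snd_mem_window {N M k l T : ℕ} [NeZero N] [NeZero M]
    {A : Finset (ZMod N × ZMod M)} {w : ZMod M} (hwin : ∀ a ∈ A, ∃ t ≤ T, a.2 = w + t)
    (hproj : ∀ a ∈ A, ∀ a' ∈ A,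
      (cInt a.1 k ∩ cInt a'.1 k).Nonempty ∨ (cInt a.2 l ∩ cInt a'.2 l).Nonempty)
    (hl : 0 < l) (hTM : T + l ≤ M) (hk : 2 * (2 * k - 1) ≤ N)
    (hkT : (2 * k - 1) * (T + 1) ≤ l * N) :
    A.card ≤ l * N := by
  set t : ZMod N × ZMod M → ℕ := fun a => (a.2 - w).val
  have hsnd : ∀ a : ZMod N × ZMod M, a.2 = w + t a := fun a => by simp [t]
  have ht : ∀ a ∈ A, t a ≤ T := fun a ha => by
    obtain ⟨t', ht', h⟩ := hwin a ha
    simp only [t, h, add_sub_cancel_left, ZMod.val_natCast_of_lt (show t' < M by omega)]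
    exact ht'
  have hfar : ∀ a ∈ A, ∀ a' ∈ A, t a + l ≤ t a' ∨ t a' + l ≤ t a →
      a.1 ∈ (Finset.Ioo (-k : ℤ) k).image fun d : ℤ => a'.1 + d := by
    intro a ha a' ha' hfar
    rcases hproj a ha a' ha' with h1 | h2
    · obtain ⟨d, hd, h⟩ := exists_eq_add_of_cInt_inter_nonempty h1
      exact Finset.mem_image.2 ⟨d, Finset.mem_Ioo.2 (abs_lt.1 hd), h.symm⟩
    · exfalso
      obtain ⟨d, hd, h⟩ := exists_eq_add_of_cInt_inter_nonempty h2
      rw [hsnd a, hsnd a'] at h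
      have hcast : ((t a : ℤ) : ZMod M) = ((t a' + d : ℤ) : ZMod M) := by
        push_cast; linear_combination h
      rw [abs_lt] at hd
      have := ht a ha
      have := ht a' ha'
      have := eq_of_intCast_zmod_eq_of_abs_sub_lt hcast (by rw [abs_lt]; omega)
      omega
  have hcard := card_le_of_far_mem_near (f := Prod.fst) (T := T) (c := 2 * k - 1)
    (S := A) (t := t) (near := fun x : ZMod N => (Finset.Ioo (-k : ℤ) k).image fun d : ℤ => x + d)
    (fun a _ a' _ h => Prod.ext (Prod.mk.inj h).1 (by rw [hsnd a, hsnd a', (Prod.mk.inj h).2]))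
    (fun x => Finset.card_image_le.trans (by rw [Int.card_Ioo]; omega)) ht hfar
    (by rwa [ZMod.card]) (by rwa [ZMod.card])
  rwa [ZMod.card] at hcard

noncomputable def corners {n₁ n₂ : ℕ} [NeZero n₁] [NeZero n₂]
    (R : Finset (Finset (ZMod n₁) × Finset (ZMod n₂))) (k l : ℕ) : Finset (ZMod n₁ × ZMod n₂) :=
  Finset.univ.filter fun a => (cInt a.1 k, cInt a.2 l) ∈ R

theorem card_le_card_corners {n₁ n₂ : ℕ} [NeZero n₁] [NeZero n₂]
    {R : Finset (Finset (ZMod n₁) × Finset (ZMod n₂))} {k l : ℕ} (hR : ∀ P ∈ R, IsRect k l P) :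
    R.card ≤ (corners R k l).card := by
  refine Finset.card_le_card_of_surjOn (fun a => (cInt a.1 k, cInt a.2 l)) fun P hP => ?_
  obtain ⟨⟨i, hi⟩, ⟨j, hj⟩⟩ := hR P hP
  exact ⟨(i, j), by simpa [corners, ← hi, ← hj] using hP, by simp [← hi, ← hj]⟩

theorem card_le_of_snd_mem_window_of_sq_lt {N M k l b : ℕ} [NeZero N] [NeZero M]
    {A : Finset (ZMod N × ZMod M)} {w : ZMod M} (hwin : ∀ a ∈ A, ∃ t ≤ 4 * b - 4, a.2 = w + t)
    (hproj : ∀ a ∈ A, ∀ a' ∈ A,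
      (cInt a.1 k ∩ cInt a'.1 k).Nonempty ∨ (cInt a.2 l ∩ cInt a'.2 l).Nonempty)
    (hkb : k ≤ b) (hl : 0 < l) (hlb : l ≤ b) (hN : 9 * b ^ 2 < N) (hM : 9 * b ^ 2 < M) :
    A.card ≤ l * N := by
  have hb : b ≤ b ^ 2 := by nlinarith
  refine card_le_of_snd_mem_window hwin hproj hl (by omega) (by omega) ?_
  have : (2 * k - 1) * (4 * b - 4 + 1) ≤ (2 * b) * (4 * b) := Nat.mul_le_mul (by omega) (by omega)
  nlinarith

section
variable {ι : Type*} {n₁ n₂ b : ℕ} {k ℓ : ι → ℕ} {A : ι → Finset (ZMod n₁ × ZMod n₂)}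

theorem exists_window_snd_of_close (hlb : ∀ i, ℓ i ≤ b)
    (hclose : ∀ i j, ∀ a ∈ A i, ∀ a' ∈ A j,
      ∃ u ∈ cInt a.2 (ℓ i), ∃ v ∈ cInt a'.2 (ℓ j), ∃ d : ℤ, |d| < b ∧ u = v + d) :
    ∃ w, ∀ i, ∀ a ∈ A i, ∃ t ≤ 4 * b - 4, a.2 = w + t := by
  by_cases hne : ∃ j, ∃ a₀, a₀ ∈ A j
  · obtain ⟨j, a₀, ha₀⟩ := hne
    refine ⟨a₀.2 - (2 * b - 2 : ℕ), fun i a ha => ?_⟩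
    obtain ⟨u, hu, v, hv, d, hd, huv⟩ := hclose i j a ha a₀ ha₀
    exact exists_window_of_mem_cInt (hlb i) (hlb j) hu hv hd huv
  · exact ⟨0, fun i a ha => (hne ⟨i, a, ha⟩).elim⟩

/-- Every rectangle meets one of the two far rectangles in the first coordinate, since its own
second projection is too short to meet both of theirs. -/
theorem exists_window_fst_of_far (hkb : ∀ i, k i ≤ b) (hlb : ∀ i, ℓ i ≤ b)
    (hA : ∀ i j, ∀ a ∈ A i, ∀ a' ∈ A j,
      (cInt a.1 (k i) ∩ cInt a'.1 (k j)).Nonempty ∨ (cInt a.2 (ℓ i) ∩ cInt a'.2 (ℓ j)).Nonempty)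
    {i j : ι} {a a' : ZMod n₁ × ZMod n₂} (ha : a ∈ A i) (ha' : a' ∈ A j)
    (hfar : ∀ u ∈ cInt a.2 (ℓ i), ∀ v ∈ cInt a'.2 (ℓ j), ∀ d : ℤ, |d| < b → u ≠ v + d) :
    ∃ w, ∀ i, ∀ a ∈ A i, ∃ t ≤ 4 * b - 4, a.1 = w + t := by
  obtain ⟨x, hx⟩ : (cInt a.1 (k i) ∩ cInt a'.1 (k j)).Nonempty := by
    refine (hA i j a ha a' ha').resolve_right fun ⟨y, hy⟩ => ?_
    rw [Finset.mem_inter] at hy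
    obtain ⟨s, hs, -⟩ := mem_cInt.1 hy.1
    exact hfar y hy.1 y hy.2 0 (by have := hlb i; simp; omega) (by simp)
  rw [Finset.mem_inter] at hx
  refine ⟨a.1 - (2 * b - 2 : ℕ), fun i'' a'' ha'' => ?_⟩
  have hmeet : (cInt a''.1 (k i'') ∩ cInt a.1 (k i)).Nonempty ∨
      (cInt a''.1 (k i'') ∩ cInt a'.1 (k j)).Nonempty := by
    refine (hA i'' i a'' ha'' a ha).imp_right fun ⟨y, hy⟩ =>
      (hA i'' j a'' ha'' a' ha').resolve_right fun ⟨y', hy'⟩ => ?_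
    rw [Finset.mem_inter] at hy hy'
    obtain ⟨d, hd, hyy'⟩ := exists_eq_add_of_mem_cInt hy.1 hy'.1
    exact hfar y hy.2 y' hy'.2 d (hd.trans_le (by exact_mod_cast hlb i'')) hyy'
  obtain ⟨χ, hχ, d, hd, hχx⟩ : ∃ χ ∈ cInt a''.1 (k i''), ∃ d : ℤ, |d| < b ∧ χ = x + d := by
    rcases hmeet with ⟨χ, hχ⟩ | ⟨χ, hχ⟩ <;> rw [Finset.mem_inter] at hχ
    · obtain ⟨d, hd, h⟩ := exists_eq_add_of_mem_cInt hχ.2 hx.1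
      exact ⟨χ, hχ.1, d, hd.trans_le (by exact_mod_cast hkb i), h⟩
    · obtain ⟨d, hd, h⟩ := exists_eq_add_of_mem_cInt hχ.2 hx.2
      exact ⟨χ, hχ.1, d, hd.trans_le (by exact_mod_cast hkb j), h⟩
  exact exists_window_of_mem_cInt (hkb i'') (hkb i) hχ hx.1 hd hχx

theorem exists_window_snd_or_fst (hkb : ∀ i, k i ≤ b) (hlb : ∀ i, ℓ i ≤ b)
    (hA : ∀ i j, ∀ a ∈ A i, ∀ a' ∈ A j,
      (cInt a.1 (k i) ∩ cInt a'.1 (k j)).Nonempty ∨ (cInt a.2 (ℓ i) ∩ cInt a'.2 (ℓ j)).Nonempty) :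
    (∃ w, ∀ i, ∀ a ∈ A i, ∃ t ≤ 4 * b - 4, a.2 = w + t) ∨
      (∃ w, ∀ i, ∀ a ∈ A i, ∃ t ≤ 4 * b - 4, a.1 = w + t) := by
  by_cases hclose : ∀ i j, ∀ a ∈ A i, ∀ a' ∈ A j,
      ∃ u ∈ cInt a.2 (ℓ i), ∃ v ∈ cInt a'.2 (ℓ j), ∃ d : ℤ, |d| < b ∧ u = v + d
  · exact Or.inl (exists_window_snd_of_close hlb hclose)
  · push Not at hclose
    obtain ⟨i, j, a, ha, a', ha', hfar⟩ := hclose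
    exact Or.inr (exists_window_fst_of_far hkb hlb hA ha ha' hfar)

end

theorem stmt9 (m b n₁ n₂ : ℕ) (k ℓ : Fin m → ℕ)
    (hk : ∀ i, 0 < k i ∧ k i ≤ b) (hl : ∀ i, 0 < ℓ i ∧ ℓ i ≤ b)
    (h1 : 9 * b ^ 2 < n₁) (h2 : 9 * b ^ 2 < n₂)
    (R : Fin m → Finset (Finset (ZMod n₁) × Finset (ZMod n₂)))
    (hrect : ∀ i, ∀ P ∈ R i, IsRect (k i) (ℓ i) P)
    (hproj : ProjIntersecting (Finset.univ.biUnion R)) :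
    (∀ i, (R i).card ≤ ℓ i * n₁) ∨ (∀ i, (R i).card ≤ k i * n₂) := by
  have : NeZero n₁ := ⟨by omega⟩
  have : NeZero n₂ := ⟨by omega⟩
  have hA : ∀ i j, ∀ a ∈ corners (R i) (k i) (ℓ i), ∀ a' ∈ corners (R j) (k j) (ℓ j),
      (cInt a.1 (k i) ∩ cInt a'.1 (k j)).Nonempty ∨
        (cInt a.2 (ℓ i) ∩ cInt a'.2 (ℓ j)).Nonempty := by
    intro i j a ha a' ha'
    simp only [corners, Finset.mem_filter, Finset.mem_univ, true_and] at ha ha'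
    exact hproj _ (Finset.mem_biUnion.2 ⟨i, Finset.mem_univ _, ha⟩)
      _ (Finset.mem_biUnion.2 ⟨j, Finset.mem_univ _, ha'⟩)
  rcases exists_window_snd_or_fst (fun i => (hk i).2) (fun i => (hl i).2) hA with
    ⟨w, hw⟩ | ⟨w, hw⟩
  · refine Or.inl fun i => (card_le_card_corners (hrect i)).trans ?_
    exact card_le_of_snd_mem_window_of_sq_lt (hw i) (fun a ha a' ha' => hA i i a ha a' ha')
      (hk i).2 (hl i).1 (hl i).2 h1 h2
  · refine Or.inr fun i => (card_le_card_corners (hrect i)).trans ?_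
    rw [← Finset.card_image_of_injective _ Prod.swap_injective]
    refine card_le_of_snd_mem_window_of_sq_lt (w := w) ?_ ?_ (hl i).2 (hk i).1 (hk i).2 h2 h1
    · simpa only [Finset.forall_mem_image, Prod.snd_swap] using hw i
    · simpa only [Finset.forall_mem_image, Prod.fst_swap, Prod.snd_swap, or_comm]
        using hA i i
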